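/- Let 𝒳 ⊆ ℝ^d, 𝒳' ⊆ ℝ^{d'}, 𝒜 finite, and suppose g : 𝒳 × 𝒜 → 𝒳' satisfies g(·,a) continuous and g(x,·) injective for each x. Let Â be finite, q̂ : Â × 𝒳 × 𝒳' → [0,1] with ∑_â q̂(â|x,x') = 1 and each q̂(â|·,·) continuous, and ĝ : 𝒳 × Â → 𝒳' arbitrary. Fix a ∈ 𝒜 and a set S ⊆ 𝒳. Suppose for all x ∈ S: ∑_â q̂(â | x, g(x,a)) ‖g(x,a) − ĝ(x,â)‖² = 0 and the entropy H(q̂(·|x, g(x,a))) = 0. Then there exists a function v : S → Â with q̂(â|x,g(x,a)) = 1{â = v(x)} and g(x,a) = ĝ(x, v(x)) for all x ∈ S. If moreover S is connected, v is constant on S. -/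

import Mathlib

/-!
Every term `p log p` of an entropy with `p ∈ [0, 1]` is nonpositive, so zero entropy forces each
probability to be `0` or `1`; summing to one, the encoder is a point mass at some `v x`, and the
reconstruction error collapses to `‖g x a - ĝ x (v x)‖²`. On `S` the continuous function
`x ↦ q̂ (v x₀) x (g x a)` takes only the values `0` and `1`, so it is constant on a connected `S`.
-/

open Finset Real

theorem eq_zero_or_eq_one_of_sum_mul_log_eq_zero {ι : Type*} {s : Finset ι} {p : ι → ℝ}
    (hp : ∀ i ∈ s, p i ∈ Set.Icc (0 : ℝ) 1) (hent : ∑ i ∈ s, p i * log (p i) = 0) :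
    ∀ i ∈ s, p i = 0 ∨ p i = 1 := by
  intro i hi
  have hterm : p i * log (p i) = 0 :=
    (sum_eq_zero_iff_of_nonpos fun j hj => mul_log_nonpos (hp j hj).1 (hp j hj).2).mp hent i hi
  rcases mul_eq_zero.mp hterm with h | h
  · exact .inl h
  · rcases log_eq_zero.mp h with h | h | h
    · exact .inl h
    · exact .inr h
    · linarith [(hp i hi).1]

theorem exists_eq_ite_of_sum_eq_one_of_eq_zero_or_eq_one {ι : Type*} [Fintype ι] [DecidableEq ι]
    {p : ι → ℝ} (h01 : ∀ i, p i = 0 ∨ p i = 1) (hsum : ∑ i, p i = 1) :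
    ∃ j, ∀ i, p i = if i = j then 1 else 0 := by
  have hp : ∀ i, p i = if p i = 1 then 1 else 0 := fun i => by
    rcases h01 i with h | h <;> simp [h]
  have hcard : #{i | p i = 1} = 1 := by
    rw [sum_congr rfl fun i _ => hp i, sum_boole] at hsum
    exact_mod_cast hsum
  obtain ⟨j, hj⟩ := card_eq_one.mp hcard
  refine ⟨j, fun i => ?_⟩
  have hi : p i = 1 ↔ i = j := by simpa using congrArg (i ∈ ·) hj
  rw [hp i]
  exact if_congr hi rfl rfl

theorem exists_eq_ite_of_sum_mul_log_eq_zero {ι : Type*} [Fintype ι] [DecidableEq ι]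
    {p : ι → ℝ} (hp : ∀ i, p i ∈ Set.Icc (0 : ℝ) 1) (hsum : ∑ i, p i = 1)
    (hent : ∑ i, p i * log (p i) = 0) :
    ∃ j, ∀ i, p i = if i = j then 1 else 0 :=
  exists_eq_ite_of_sum_eq_one_of_eq_zero_or_eq_one
    (fun i => eq_zero_or_eq_one_of_sum_mul_log_eq_zero (fun i _ => hp i) hent i (mem_univ i)) hsum

theorem eq_of_sum_ite_mul_norm_sq_eq_zero {ι E : Type*} [Fintype ι] [DecidableEq ι]
    [NormedAddCommGroup E] {y : E} {z : ι → E} {j : ι}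
    (h : ∑ i, (if i = j then 1 else 0) * ‖y - z i‖ ^ 2 = 0) : y = z j := by
  simpa [sub_eq_zero] using h

theorem IsPreconnected.eq_of_continuousOn_eq_ite {X ι : Type*} [TopologicalSpace X]
    [DecidableEq ι] {S : Set X} (hS : IsPreconnected S) {q : ι → X → ℝ}
    (hq : ∀ i, ContinuousOn (q i) S) {v : X → ι}
    (hv : ∀ x ∈ S, ∀ i, q i x = if i = v x then 1 else 0) {x y : X} (hx : x ∈ S) (hy : y ∈ S) :
    v x = v y := by
  have hmaps : Set.MapsTo (q (v x)) S {0, 1} := fun z hz => by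
    rw [hv z hz]; split_ifs <;> simp
  have hconst := hS.constant_of_mapsTo (Set.toFinite _).isDiscrete (hq (v x)) hmaps hx hy
  rw [hv x hx, hv y hy] at hconst
  by_contra hne
  simp [hne] at hconst

theorem determinism_and_reconstruction_general
    {d d' : ℕ} {A Ahat : Type*} [Fintype Ahat] [DecidableEq Ahat]
    (𝒳 : Set (EuclideanSpace ℝ (Fin d))) (𝒳' : Set (EuclideanSpace ℝ (Fin d')))
    (g : EuclideanSpace ℝ (Fin d) → A → EuclideanSpace ℝ (Fin d'))
    (hgcont : ∀ a, ContinuousOn (fun x => g x a) 𝒳)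
    (hgmap : ∀ a, ∀ x ∈ 𝒳, g x a ∈ 𝒳')
    (qhat : Ahat → EuclideanSpace ℝ (Fin d) → EuclideanSpace ℝ (Fin d') → ℝ)
    (hqmem : ∀ ahat x x', qhat ahat x x' ∈ Set.Icc (0 : ℝ) 1)
    (hqsum : ∀ x x', ∑ ahat, qhat ahat x x' = 1)
    (hqcont : ∀ ahat, ContinuousOn
      (fun p : EuclideanSpace ℝ (Fin d) × EuclideanSpace ℝ (Fin d') => qhat ahat p.1 p.2)
      (𝒳 ×ˢ 𝒳'))
    (ghat : EuclideanSpace ℝ (Fin d) → Ahat → EuclideanSpace ℝ (Fin d'))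
    (a : A) (S : Set (EuclideanSpace ℝ (Fin d))) (hSsub : S ⊆ 𝒳)
    (hrec : ∀ x ∈ S, ∑ ahat, qhat ahat x (g x a) * ‖g x a - ghat x ahat‖ ^ 2 = 0)
    (hent : ∀ x ∈ S,
      (-∑ ahat, qhat ahat x (g x a) * Real.log (qhat ahat x (g x a))) = 0) :
    ∃ v : EuclideanSpace ℝ (Fin d) → Ahat,
      (∀ x ∈ S,
        (∀ ahat, qhat ahat x (g x a) = if ahat = v x then 1 else 0) ∧
        g x a = ghat x (v x)) ∧
      (IsConnected S → ∀ x ∈ S, ∀ y ∈ S, v x = v y) := by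
  have hpoint : ∀ x ∈ S, ∃ j, ∀ b, qhat b x (g x a) = if b = j then 1 else 0 := fun x hx =>
    exists_eq_ite_of_sum_mul_log_eq_zero (fun b => hqmem b x (g x a)) (hqsum x (g x a))
      (neg_eq_zero.mp (hent x hx))
  have : Nonempty Ahat :=
    univ_nonempty_iff.mp (nonempty_of_sum_ne_zero ((hqsum 0 0).trans_ne one_ne_zero))
  choose! v hv using hpoint
  have hqcont_S : ∀ b, ContinuousOn (fun x => qhat b x (g x a)) S := fun b =>
    (hqcont b).comp (continuousOn_id.prodMk ((hgcont a).mono hSsub))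
      fun x hx => ⟨hSsub hx, hgmap a x (hSsub hx)⟩
  refine ⟨v, fun x hx => ⟨hv x hx, ?_⟩, fun hS x hx y hy =>
    hS.isPreconnected.eq_of_continuousOn_eq_ite hqcont_S hv hx hy⟩
  apply eq_of_sum_ite_mul_norm_sq_eq_zero
  simpa only [hv x hx] using hrec x hx

/-- Determinism and reconstruction: zero entropy forces the encoder to be a point
mass at some `v x`, zero reconstruction error forces the decoder to reproduce
`g x a` at the chosen latent action, and connectedness of `S` forces `v` to be
constant. -/
theorem determinism_and_reconstruction
    {d d' : ℕ} {A Ahat : Type*} [Fintype A] [Fintype Ahat] [DecidableEq Ahat]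
    (𝒳 : Set (EuclideanSpace ℝ (Fin d))) (𝒳' : Set (EuclideanSpace ℝ (Fin d')))
    (g : EuclideanSpace ℝ (Fin d) → A → EuclideanSpace ℝ (Fin d'))
    (hgcont : ∀ a, ContinuousOn (fun x => g x a) 𝒳)
    (hgmap : ∀ a, ∀ x ∈ 𝒳, g x a ∈ 𝒳')
    (hginj : ∀ x, ∀ a₁ a₂ : A, a₁ ≠ a₂ → g x a₁ ≠ g x a₂)
    (qhat : Ahat → EuclideanSpace ℝ (Fin d) → EuclideanSpace ℝ (Fin d') → ℝ)
    (hqmem : ∀ ahat x x', qhat ahat x x' ∈ Set.Icc (0 : ℝ) 1)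
    (hqsum : ∀ x x', ∑ ahat, qhat ahat x x' = 1)
    (hqcont : ∀ ahat, ContinuousOn
      (fun p : EuclideanSpace ℝ (Fin d) × EuclideanSpace ℝ (Fin d') => qhat ahat p.1 p.2)
      (𝒳 ×ˢ 𝒳'))
    (ghat : EuclideanSpace ℝ (Fin d) → Ahat → EuclideanSpace ℝ (Fin d'))
    (a : A) (S : Set (EuclideanSpace ℝ (Fin d))) (hSsub : S ⊆ 𝒳)
    (hrec : ∀ x ∈ S, ∑ ahat, qhat ahat x (g x a) * ‖g x a - ghat x ahat‖ ^ 2 = 0)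
    (hent : ∀ x ∈ S,
      (-∑ ahat, qhat ahat x (g x a) * Real.log (qhat ahat x (g x a))) = 0) :
    ∃ v : EuclideanSpace ℝ (Fin d) → Ahat,
      (∀ x ∈ S,
        (∀ ahat, qhat ahat x (g x a) = if ahat = v x then 1 else 0) ∧
        g x a = ghat x (v x)) ∧
      (IsConnected S → ∀ x ∈ S, ∀ y ∈ S, v x = v y) :=
  determinism_and_reconstruction_general 𝒳 𝒳' g hgcont hgmap qhat hqmem hqsum hqcont ghat a S hSsub
    hrec hent
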